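/- Uniform envelope for the log-likelihood ratio over a compact rectangle: Fix θ₀ = (μ₀, ω₀²) with ω₀² > 0 and let B = [μ̲, μ̄] × [ω̲², ω̄²] be a bounded rectangle in ℝ × (0,∞) with ω̲² > 0. Then there exist constants c₀, c₁, c₂ ≥ 0 (depending only on θ₀ and B) such that for all u ∈ ℝ, v > 0 and all θ ∈ B: | log f(u, v | θ₀) − log f(u, v | θ) | ≤ c₀ + c₁·( u/(1 + ω₀²v) )² + c₂·|u|/(1 + ω₀²v). -/

import Mathlib

/-!
Expanding the square, `log f(u, v | μ, ω²) = (ω²u² + 2μu − vμ²) / (2(1 + ω²v)) − log(1 + ω²v) / 2`.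
On the rectangle the ratio `(1 + ω₀²v) / (1 + ω²v)` and its inverse are bounded by constants, which
controls the difference of the log terms and turns `μu / (1 + ω²v)` into a bounded multiple of
`u / (1 + ω₀²v)`; the `u²` terms combine to `(ω₀² − ω²)u² / (2(1 + ω²v)(1 + ω₀²v))`, and
`vμ² / (1 + ω²v) ≤ μ² / ω²` is bounded outright.
-/

/-- The random-effects likelihood
`f(u, v | θ) = (1 + ω²v)^(−1/2) · exp(−(v/(2(1 + ω²v)))·(μ − u/v)²) · exp(u²/(2v))`
for `θ = (μ, ω²)`. -/
noncomputable def randomEffectsLik (u v μ ωsq : ℝ) : ℝ :=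
  (1 + ωsq * v) ^ (-(1 : ℝ) / 2) *
    Real.exp (-(v / (2 * (1 + ωsq * v))) * (μ - u / v) ^ 2) *
    Real.exp (u ^ 2 / (2 * v))

open Real

lemma log_randomEffectsLik {u v μ ω : ℝ} (hv : v ≠ 0) (hA : 0 < 1 + ω * v) :
    log (randomEffectsLik u v μ ω) =
      (ω * u ^ 2 + 2 * μ * u - v * μ ^ 2) / (2 * (1 + ω * v)) - log (1 + ω * v) / 2 := by
  unfold randomEffectsLik
  rw [log_mul (by positivity) (exp_ne_zero _), log_mul (by positivity) (exp_ne_zero _),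
    log_rpow hA, log_exp, log_exp]
  field_simp
  ring

/-- The only part of the ratio that grows like `u²` has coefficient `(ω₀ - ω)` times the bounded
factor `(1 + ω₀v)/(1 + ωv)`, because `ω₀(1 + ωv) - ω(1 + ω₀v) = ω₀ - ω`. -/
lemma log_randomEffectsLik_sub {u v μ₀ ω₀ μ ω : ℝ} (hv : v ≠ 0)
    (hA₀ : 0 < 1 + ω₀ * v) (hA : 0 < 1 + ω * v) :
    log (randomEffectsLik u v μ₀ ω₀) - log (randomEffectsLik u v μ ω) =
      (log (1 + ω * v) - log (1 + ω₀ * v)) / 2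
        + (v * μ ^ 2 / (1 + ω * v) - v * μ₀ ^ 2 / (1 + ω₀ * v)) / 2
        + (μ₀ - μ * ((1 + ω₀ * v) / (1 + ω * v))) * (u / (1 + ω₀ * v))
        + (ω₀ - ω) / 2 * ((1 + ω₀ * v) / (1 + ω * v)) * (u / (1 + ω₀ * v)) ^ 2 := by
  rw [log_randomEffectsLik hv hA₀, log_randomEffectsLik hv hA]
  -- `field_simp` normalises `1 + ω * v` to `1 + v * ω`
  have : 1 + v * ω ≠ 0 := by rw [mul_comm]; exact hA.ne'
  field_simp
  ring

lemma one_add_mul_le_mul_one_add_mul {a b r v : ℝ} (hr : 1 ≤ r) (hab : a ≤ r * b) (hv : 0 ≤ v) :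
    1 + a * v ≤ r * (1 + b * v) := by
  nlinarith [mul_le_mul_of_nonneg_right hab hv]

lemma abs_log_sub_log_le {x y a b : ℝ} (hx : 0 < x) (hy : 0 < y)
    (hxy : x ≤ a * y) (hyx : y ≤ b * x) : |log x - log y| ≤ max (log a) (log b) := by
  have ha : 0 < a := pos_of_mul_pos_left (hx.trans_le hxy) hy.le
  have hb : 0 < b := pos_of_mul_pos_left (hy.trans_le hyx) hx.le
  have h₁ := log_le_log hx hxy
  have h₂ := log_le_log hy hyx
  rw [log_mul ha.ne' hy.ne'] at h₁
  rw [log_mul hb.ne' hx.ne'] at h₂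
  rw [abs_le]
  constructor <;> linarith [le_max_left (log a) (log b), le_max_right (log a) (log b)]

lemma mul_sq_div_one_add_mul_le {v μ ω : ℝ} (hω : 0 < ω) (hv : 0 ≤ v) :
    v * μ ^ 2 / (1 + ω * v) ≤ μ ^ 2 / ω := by
  rw [div_le_div_iff₀ (by positivity) hω]
  nlinarith [sq_nonneg μ]

lemma abs_log_randomEffectsLik_sub_le {u v μ₀ ω₀ μ ω M ωlo r r' : ℝ} (hv : 0 < v)
    (hω₀ : 0 < ω₀) (hωlo : 0 < ωlo) (hω : ωlo ≤ ω) (hμ : |μ| ≤ M)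
    (hr : 1 ≤ r) (hrω : ω₀ ≤ r * ω) (hr' : 1 ≤ r') (hr'ω : ω ≤ r' * ω₀) :
    |log (randomEffectsLik u v μ₀ ω₀) - log (randomEffectsLik u v μ ω)| ≤
      (max (log r) (log r') + (M ^ 2 / ωlo + μ₀ ^ 2 / ω₀)) / 2
        + r * r' * ω₀ / 2 * (u / (1 + ω₀ * v)) ^ 2 + (|μ₀| + M * r) * (|u| / (1 + ω₀ * v)) := by
  have hωpos : 0 < ω := hωlo.trans_le hω
  have hA : 0 < 1 + ω * v := by positivity
  have hA₀ : 0 < 1 + ω₀ * v := by positivity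
  have hAA₀ := one_add_mul_le_mul_one_add_mul hr' hr'ω hv.le
  have hA₀A := one_add_mul_le_mul_one_add_mul hr hrω hv.le
  have hratio : |(1 + ω₀ * v) / (1 + ω * v)| ≤ r := by
    rw [abs_of_pos (by positivity)]
    exact div_le_of_le_mul₀ hA.le (by positivity) hA₀A
  have hlog : |(log (1 + ω * v) - log (1 + ω₀ * v)) / 2| ≤ max (log r) (log r') / 2 := by
    rw [abs_div, abs_two]
    gcongr
    rw [max_comm]
    exact abs_log_sub_log_le hA hA₀ hAA₀ hA₀A
  have hquad : |(v * μ ^ 2 / (1 + ω * v) - v * μ₀ ^ 2 / (1 + ω₀ * v)) / 2| ≤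
      (M ^ 2 / ωlo + μ₀ ^ 2 / ω₀) / 2 := by
    have h₁ : v * μ ^ 2 / (1 + ω * v) ≤ M ^ 2 / ωlo :=
      (mul_sq_div_one_add_mul_le hωpos hv.le).trans <|
        div_le_div₀ (sq_nonneg M) (sq_le_sq.2 (hμ.trans (le_abs_self M))) hωlo hω
    have h₀ := mul_sq_div_one_add_mul_le (μ := μ₀) hω₀ hv.le
    rw [abs_div, abs_two]
    gcongr
    refine (abs_sub _ _).trans ?_
    rw [abs_of_nonneg (by positivity), abs_of_nonneg (by positivity)]
    gcongr
  have hlin : |μ₀ - μ * ((1 + ω₀ * v) / (1 + ω * v))| ≤ |μ₀| + M * r :=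
    (abs_sub _ _).trans <| by
      rw [abs_mul]
      gcongr
      exact (abs_nonneg μ).trans hμ
  have hsq : |(ω₀ - ω) / 2 * ((1 + ω₀ * v) / (1 + ω * v))| ≤ r * r' * ω₀ / 2 := by
    have : |ω₀ - ω| ≤ r' * ω₀ := by
      rw [abs_sub_le_iff]; constructor <;> nlinarith
    rw [abs_mul, abs_div, abs_two]
    calc |ω₀ - ω| / 2 * |(1 + ω₀ * v) / (1 + ω * v)| ≤ r' * ω₀ / 2 * r := by gcongr
      _ = r * r' * ω₀ / 2 := by ring
  have hX : |u / (1 + ω₀ * v)| = |u| / (1 + ω₀ * v) := by rw [abs_div, abs_of_pos hA₀]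
  rw [log_randomEffectsLik_sub hv.ne' hA₀ hA]
  refine (norm_add₄_le (E := ℝ)).trans ?_
  simp only [Real.norm_eq_abs]
  rw [abs_mul _ (u / _), abs_mul _ ((u / _) ^ 2), abs_pow, sq_abs, hX]
  nlinarith [mul_le_mul_of_nonneg_right hlin (by positivity : 0 ≤ |u| / (1 + ω₀ * v)),
    mul_le_mul_of_nonneg_right hsq (sq_nonneg (u / (1 + ω₀ * v)))]

theorem stmt6_general (μ₀ ω₀sq : ℝ) (hω₀ : 0 < ω₀sq)
    (μlo μhi ωlo ωhi : ℝ) (hωlo : 0 < ωlo) :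
    ∃ c₀ c₁ c₂ : ℝ, 0 ≤ c₀ ∧ 0 ≤ c₁ ∧ 0 ≤ c₂ ∧
      ∀ u v : ℝ, 0 < v → ∀ θ ∈ Set.Icc μlo μhi ×ˢ Set.Icc ωlo ωhi,
        |Real.log (randomEffectsLik u v μ₀ ω₀sq) - Real.log (randomEffectsLik u v θ.1 θ.2)| ≤
          c₀ + c₁ * (u / (1 + ω₀sq * v)) ^ 2 + c₂ * (|u| / (1 + ω₀sq * v)) := by
  set r := max 1 (ω₀sq / ωlo)
  set r' := max 1 (ωhi / ω₀sq)
  set M := max |μlo| |μhi|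
  have hr : 1 ≤ r := le_max_left _ _
  have hr' : 1 ≤ r' := le_max_left _ _
  have hM : 0 ≤ M := le_max_of_le_left (abs_nonneg _)
  have hlog : 0 ≤ max (log r) (log r') := le_max_of_le_left (log_nonneg hr)
  refine ⟨(max (log r) (log r') + (M ^ 2 / ωlo + μ₀ ^ 2 / ω₀sq)) / 2, r * r' * ω₀sq / 2,
    |μ₀| + M * r, by positivity, by positivity, by positivity, ?_⟩
  rintro u v hv ⟨μ, ω⟩ ⟨⟨hμlo, hμhi⟩, hωlo', hωhi'⟩
  refine abs_log_randomEffectsLik_sub_le hv hω₀ hωlo hωlo' (abs_le_max_abs_abs hμlo hμhi)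
    hr ?_ hr' (hωhi'.trans ((div_le_iff₀ hω₀).1 (le_max_right _ _)))
  calc ω₀sq ≤ r * ωlo := (div_le_iff₀ hωlo).1 (le_max_right _ _)
    _ ≤ r * ω := by gcongr

/-- Uniform envelope for the log-likelihood ratio over a compact rectangle
`B = [μ̲, μ̄] × [ω̲², ω̄²] ⊆ ℝ × (0, ∞)`: there are constants `c₀, c₁, c₂ ≥ 0`
(depending only on `θ₀` and `B`) such that for all `u ∈ ℝ`, `v > 0` and `θ ∈ B`,
`|log f(u,v|θ₀) − log f(u,v|θ)| ≤ c₀ + c₁ (u/(1+ω₀²v))² + c₂ |u|/(1+ω₀²v)`. -/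
theorem stmt6 (μ₀ ω₀sq : ℝ) (hω₀ : 0 < ω₀sq)
    (μlo μhi ωlo ωhi : ℝ) (hμ : μlo ≤ μhi) (hωlo : 0 < ωlo) (hω : ωlo ≤ ωhi) :
    ∃ c₀ c₁ c₂ : ℝ, 0 ≤ c₀ ∧ 0 ≤ c₁ ∧ 0 ≤ c₂ ∧
      ∀ u v : ℝ, 0 < v → ∀ θ ∈ Set.Icc μlo μhi ×ˢ Set.Icc ωlo ωhi,
        |Real.log (randomEffectsLik u v μ₀ ω₀sq) - Real.log (randomEffectsLik u v θ.1 θ.2)| ≤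
          c₀ + c₁ * (u / (1 + ω₀sq * v)) ^ 2 + c₂ * (|u| / (1 + ω₀sq * v)) :=
  stmt6_general μ₀ ω₀sq hω₀ μlo μhi ωlo ωhi hωlo
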